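/- arXiv:1607.00514 — 3 statements merged into one kernel-verified Lean document; each statement's English description precedes it below -/
import Mathlib

section
/- Let M_n = V diag(Λ_{n1},…,Λ_{nd}) V⁻¹, n = 1,…,N, be real d×d jointly diagonalizable matrices with real eigenvalues satisfying: for every i ≠ i' there exists n with Λ_{ni} ≠ Λ_{ni'}. Then there exists β = (β_1,…,β_N) ∈ ℝ^N such that the matrix M = Σ_{n=1}^N β_n M_n has d distinct real eigenvalues. -/
open Matrix Kronecker BigOperators

noncomputable section

/-- Square real matrices. -/
abbrev Mat (d : ℕ) := Matrix (Fin d) (Fin d) ℝ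

/-- Strictly lower-triangular part: `[low A]_{ij} = A_{ij}` if `i > j`, else `0`. -/
def lowPart {d : ℕ} (A : Mat d) : Mat d :=
  Matrix.of fun i j => if (j : ℕ) < (i : ℕ) then A i j else 0

/-- Frobenius norm. -/
def frob {m n : Type*} [Fintype m] [Fintype n] (A : Matrix m n ℝ) : ℝ :=
  Real.sqrt (∑ i, ∑ j, (A i j) ^ 2)

/-- Euclidean norm of a vector. -/
def enorm {m : Type*} [Fintype m] (v : m → ℝ) : ℝ :=
  Real.sqrt (∑ i, (v i) ^ 2)

/-- Largest singular value. -/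
def sigMax {m n : Type*} [Fintype m] [Fintype n] (A : Matrix m n ℝ) : ℝ :=
  sSup {r | ∃ x : n → ℝ, _root_.enorm x = 1 ∧ r = _root_.enorm (A.mulVec x)}

/-- Smallest singular value. -/
def sigMin {m n : Type*} [Fintype m] [Fintype n] (A : Matrix m n ℝ) : ℝ :=
  sInf {r | ∃ x : n → ℝ, _root_.enorm x = 1 ∧ r = _root_.enorm (A.mulVec x)}

/-- Spectral norm (largest singular value). -/
def specNorm {m n : Type*} [Fintype m] [Fintype n] (A : Matrix m n ℝ) : ℝ := sigMax A

/-- Condition number `κ(A) = σ_max(A)/σ_min(A)`. -/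
def condNum {m n : Type*} [Fintype m] [Fintype n] (A : Matrix m n ℝ) : ℝ :=
  sigMax A / sigMin A

/-- Matrix exponential. -/
def matExp {d : ℕ} (A : Mat d) : Mat d := ∑' k : ℕ, ((k.factorial : ℝ))⁻¹ • A ^ k

/-- Column-wise vectorization: index `(j, i)` holds the `(i, j)` entry. -/
def vecM {d : ℕ} (A : Mat d) : Fin d × Fin d → ℝ := fun p => A p.2 p.1

/-- Inverse of the column-wise vectorization. -/
def matM {d : ℕ} (v : Fin d × Fin d → ℝ) : Mat d := Matrix.of fun i j => v (j, i)

/-- The `d² × d²` diagonal 0/1 matrix `Low` with `Low (vec A) = vec (low A)`. -/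
def lowOp (d : ℕ) : Matrix (Fin d × Fin d) (Fin d × Fin d) ℝ :=
  Matrix.diagonal fun p => if (p.1 : ℕ) < (p.2 : ℕ) then 1 else 0

/-- `P` is a valid `P_low` projector: `P Pᵀ = 1` and `Pᵀ P = Low`. -/
def IsPlow {d k : ℕ} (P : Matrix (Fin k) (Fin d × Fin d) ℝ) : Prop :=
  P * Pᵀ = 1 ∧ Pᵀ * P = lowOp d

/-- Orthogonal matrix. -/
def IsOrtho {d : ℕ} (U : Mat d) : Prop := Uᵀ * U = 1

/-- Skew-symmetric matrix. -/
def IsSkew {d : ℕ} (X : Mat d) : Prop := Xᵀ = -X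

/-- Matrix commutator. -/
def mcomm {d : ℕ} (A B : Mat d) : Mat d := A * B - B * A

/-- `U₀` is an exact joint triangularizer of the family `M`. -/
def ExactTriang {d N : ℕ} (U₀ : Mat d) (M : Fin N → Mat d) : Prop :=
  IsOrtho U₀ ∧ ∀ n, lowPart (U₀ᵀ * M n * U₀) = 0

/-- The joint triangularization loss `L(U) = Σₙ ‖low(Uᵀ M̂ₙ U)‖²`. -/
def Loss {d N : ℕ} (Mh : Fin N → Mat d) (U : Mat d) : ℝ :=
  ∑ n, (frob (lowPart (Uᵀ * Mh n * U))) ^ 2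

/-- Stationary point of the loss on the orthogonal group: the Riemannian
gradient vanishes, i.e. all directional derivatives along skew directions vanish. -/
def IsStationaryLoss {d N : ℕ} (Mh : Fin N → Mat d) (U : Mat d) : Prop :=
  IsOrtho U ∧ ∀ X : Mat d, IsSkew X →
    deriv (fun t : ℝ => Loss Mh (U * matExp (t • X))) 0 = 0

/-- The operator `t̃ = P_low (1 ⊗ Aᵀ − A ⊗ 1) P_lowᵀ`. -/
def ttil {d k : ℕ} (P : Matrix (Fin k) (Fin d × Fin d) ℝ) (A : Mat d) :
    Matrix (Fin k) (Fin k) ℝ :=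
  P * ((1 : Mat d) ⊗ₖ Aᵀ - A ⊗ₖ (1 : Mat d)) * Pᵀ

/-- The joint eigengap `γ = min_{i<i'} Σₙ (Λ_{ni} − Λ_{ni'})²`. -/
def gapMin {d N : ℕ} (Λ : Fin N → Fin d → ℝ) : ℝ :=
  sInf {r | ∃ i i' : Fin d, i < i' ∧ r = ∑ n, (Λ n i - Λ n i') ^ 2}

/-! The parameters `β` for which two of the eigenvalues `∑ₙ βₙ Λₙᵢ` coincide form finitely many
hyperplanes `∑ₙ βₙ (Λₙᵢ - Λₙᵢ') = 0`, all proper by the non-degeneracy condition, and a real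
vector space is not a finite union of proper subspaces. -/

theorem LinearMap.exists_forall_apply_ne_zero {k E ι : Type*} [DivisionRing k] [Infinite k]
    [AddCommGroup E] [Module k E] [Finite ι] {f : ι → E →ₗ[k] k} (hf : ∀ i, f i ≠ 0) :
    ∃ x, ∀ i, f i x ≠ 0 := by
  have hcover : ⋃ i, (LinearMap.ker (f i) : Set E) ≠ Set.univ := fun h ↦
    have ⟨i, hi⟩ := Subspace.exists_eq_top_of_iUnion_eq_univ h
    hf i (LinearMap.ker_eq_top.mp hi)
  simpa using (Set.ne_univ_iff_exists_notMem _).mp hcover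

theorem Matrix.exists_injective_dotProduct {K ι κ : Type*} [Field K] [Infinite K] [Fintype ι]
    [Finite κ] {u : κ → ι → K} (hu : Function.Injective u) :
    ∃ β : ι → K, Function.Injective fun a ↦ β ⬝ᵥ u a := by
  let f (p : {p : κ × κ // p.1 ≠ p.2}) := (dotProductBilin K K).flip (u p.1.1 - u p.1.2)
  have hf (p) : f p ≠ 0 := fun h ↦ p.2 <| hu <| sub_eq_zero.mp <|
    dotProduct_eq_zero _ fun β ↦ by simpa [f, dotProduct_comm] using LinearMap.congr_fun h β
  obtain ⟨β, hβ⟩ := LinearMap.exists_forall_apply_ne_zero hf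
  refine ⟨β, fun a b hab ↦ by_contra fun hne ↦ hβ ⟨(a, b), hne⟩ ?_⟩
  simpa [f, dotProduct_sub, sub_eq_zero] using hab

theorem Matrix.sum_smul_mul_diagonal_mul {R m n p ι : Type*} [CommSemiring R] [Fintype m]
    [DecidableEq m] (s : Finset ι) (β : ι → R) (P : Matrix n m R) (d : ι → m → R)
    (Q : Matrix m p R) :
    ∑ x ∈ s, β x • (P * diagonal (d x) * Q) =
      P * diagonal (fun i ↦ ∑ x ∈ s, β x * d x i) * Q := by
  have hdiag : diagonal (fun i ↦ ∑ x ∈ s, β x * d x i) = ∑ x ∈ s, β x • diagonal (d x) := by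
    ext i j
    by_cases h : i = j <;> simp [h, Matrix.sum_apply]
  simp only [hdiag, Matrix.mul_sum, Matrix.sum_mul, Matrix.mul_smul, Matrix.smul_mul]

theorem exists_linear_combination_distinct_eigenvalues_general {d N : ℕ}
    (V : Mat d)
    (Λ : Fin N → Fin d → ℝ) (M : Fin N → Mat d)
    (hM : ∀ n, M n = V * Matrix.diagonal (Λ n) * V⁻¹)
    (hnd : ∀ i i' : Fin d, i ≠ i' → ∃ n, Λ n i ≠ Λ n i') :
    ∃ β : Fin N → ℝ,
      (∑ n, β n • M n) = V * Matrix.diagonal (fun i => ∑ n, β n * Λ n i) * V⁻¹ ∧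
      Function.Injective fun i : Fin d => ∑ n, β n * Λ n i := by
  have hcols : Function.Injective fun i n ↦ Λ n i := fun i i' h ↦
    by_contra fun hne ↦ (hnd i i' hne).elim fun n hn ↦ hn (congr_fun h n)
  obtain ⟨β, hβ⟩ := Matrix.exists_injective_dotProduct hcols
  refine ⟨β, ?_, hβ⟩
  simp only [hM]
  exact Matrix.sum_smul_mul_diagonal_mul _ _ _ _ _

/-- under the non-degeneracy condition there exists a linear
combination `M = Σₙ βₙ Mₙ` with `d` distinct real eigenvalues
(namely `λᵢ(M) = Σₙ βₙ Λ_{ni}`). -/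
theorem exists_linear_combination_distinct_eigenvalues {d N : ℕ}
    (V : Mat d) (hV : IsUnit V)
    (Λ : Fin N → Fin d → ℝ) (M : Fin N → Mat d)
    (hM : ∀ n, M n = V * Matrix.diagonal (Λ n) * V⁻¹)
    (hnd : ∀ i i' : Fin d, i ≠ i' → ∃ n, Λ n i ≠ Λ n i') :
    ∃ β : Fin N → ℝ,
      (∑ n, β n • M n) = V * Matrix.diagonal (fun i => ∑ n, β n * Λ n i) * V⁻¹ ∧
      Function.Injective fun i : Fin d => ∑ n, β n * Λ n i :=
  exists_linear_combination_distinct_eigenvalues_general V Λ M hM hnd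
end
end

section
/- Let A be an invertible upper-triangular real d×d matrix and Σ a real diagonal d×d matrix. Then, as d²×d² matrices, Low (A ⊗ A⁻ᵀ)(I ⊗ Σ − Σ ⊗ I)(A⁻¹ ⊗ Aᵀ) Low = Low (A ⊗ A⁻ᵀ) Low (I ⊗ Σ − Σ ⊗ I) Low (A⁻¹ ⊗ Aᵀ) Low, i.e. the projector onto strictly lower-triangular matrices can be inserted between the three factors. -/
open Matrix Kronecker BigOperators

noncomputable section

/-
In column-major vectorization, `(B ⊗ Cᵀ) vec X = vec (Cᵀ X Bᵀ)`. For upper-triangular `B`, `C` this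
is a product lower × strictly lower × lower, hence strictly lower: `A⁻¹ ⊗ Aᵀ` maps the range of
`Low` into itself, `Low (A⁻¹ ⊗ Aᵀ) Low = (A⁻¹ ⊗ Aᵀ) Low`. The middle factor `I ⊗ Σ − Σ ⊗ I` is
diagonal, so it commutes with the diagonal `Low`, and both inner copies of `Low` are absorbed.
-/

lemma blockTriangular_id_of_lowPart_eq_zero {d : ℕ} {A : Mat d} (h : lowPart A = 0) :
    A.BlockTriangular id := fun i j (hij : j < i) => by
  simpa [lowPart, hij] using congrFun (congrFun h i) j

lemma one_kronecker_diagonal_sub_diagonal_kronecker_one {n R : Type*} [Fintype n]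
    [DecidableEq n] [CommRing R] (s : n → R) :
    (1 : Matrix n n R) ⊗ₖ diagonal s - diagonal s ⊗ₖ (1 : Matrix n n R) =
      diagonal fun p => s p.2 - s p.1 := by
  rw [← diagonal_one, diagonal_kronecker_diagonal, diagonal_kronecker_diagonal, diagonal_sub]
  simp

lemma commute_lowOp_one_kronecker_diagonal_sub {d : ℕ} (s : Fin d → ℝ) :
    Commute (lowOp d) ((1 : Mat d) ⊗ₖ diagonal s - diagonal s ⊗ₖ (1 : Mat d)) := by
  rw [one_kronecker_diagonal_sub_diagonal_kronecker_one]
  exact commute_diagonal _ _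

lemma lowOp_mul_kronecker_transpose_mul_lowOp {d : ℕ} {B C : Mat d}
    (hB : B.BlockTriangular id) (hC : C.BlockTriangular id) :
    lowOp d * (B ⊗ₖ Cᵀ) * lowOp d = (B ⊗ₖ Cᵀ) * lowOp d := by
  ext p q
  simp only [lowOp, diagonal_mul, mul_diagonal, kroneckerMap_apply, transpose_apply]
  by_cases hp : (p.1 : ℕ) < p.2
  · simp [hp]
  by_cases hq : (q.1 : ℕ) < q.2
  · -- a nonzero entry would force `p.1 ≤ q.1 < q.2 ≤ p.2`
    rcases lt_or_ge q.1 p.1 with h | h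
    · simp [hB h]
    · have : p.2 < q.2 := Fin.lt_def.mpr (by omega)
      simp [hC this]
  · simp [hq]

/-- low-projector insertion identity for upper-triangular `A`
and diagonal `Σ`. -/
theorem low_insertion {d : ℕ} (A : Mat d) (hA : IsUnit A) (hAu : lowPart A = 0)
    (s : Fin d → ℝ) :
    lowOp d * (A ⊗ₖ (A⁻¹)ᵀ) *
        ((1 : Mat d) ⊗ₖ Matrix.diagonal s - Matrix.diagonal s ⊗ₖ (1 : Mat d)) *
        (A⁻¹ ⊗ₖ Aᵀ) * lowOp d =
      lowOp d * (A ⊗ₖ (A⁻¹)ᵀ) * lowOp d *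
        ((1 : Mat d) ⊗ₖ Matrix.diagonal s - Matrix.diagonal s ⊗ₖ (1 : Mat d)) * lowOp d *
        (A⁻¹ ⊗ₖ Aᵀ) * lowOp d := by
  have : Invertible A := hA.invertible
  have hAtri := blockTriangular_id_of_lowPart_eq_zero hAu
  have hK := lowOp_mul_kronecker_transpose_mul_lowOp
    (blockTriangular_inv_of_blockTriangular hAtri) hAtri
  simp only [mul_assoc] at hK ⊢
  rw [hK, (commute_lowOp_one_kronecker_diagonal_sub s).left_comm, hK]
end
end

section
/- Let M_n = V diag(Λ_{n1},…,Λ_{nd}) V⁻¹, n = 1,…,N, be jointly diagonalizable real d×d matrices with γ = min_{i<i'} Σ_{n=1}^N (Λ_{ni} − Λ_{ni'})² > 0, and let U₀ be an exact joint triangularizer of {M_n}. Then for every skew-symmetric d×d matrix X: Σ_{n=1}^N ‖low([U₀ᵀ M_n U₀, X])‖² ≥ (γ / (2 κ(V)⁴)) · ‖X‖². -/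
open Matrix Kronecker BigOperators

noncomputable section

/-- Stationary point of the loss on the orthogonal group: the Riemannian
gradient vanishes, i.e. all directional derivatives along skew directions vanish. -/
def IsStationary' {d N : ℕ} (Mh : Fin N → Mat d) (U : Mat d) : Prop :=
  IsOrtho U ∧ ∀ X : Mat d, IsSkew X →
    deriv (fun t : ℝ => Loss Mh (U * matExp (t • X))) 0 = 0

/-!
Write `X = Y - Yᵀ` with `Y = low X`. Each `Tₙ = U₀ᵀ Mₙ U₀` is upper triangular, so
`low [Tₙ, X] = low [Tₙ, Y]` and `‖X‖² = 2 ‖Y‖²`. On strictly lower triangular matrices the adjoint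
of `Y ↦ low [Tₙ, Y]` is `W ↦ [Tₙᵀ, W]`, and with `Q = U₀ᵀ V` (so `Tₙ = Q Dₙ Q⁻¹`) the similarity
`W ↦ Qᵀ W Q⁻ᵀ` turns it into `[Dₙ, ·]`, i.e. entrywise multiplication by `Λₙᵢ - Λₙⱼ`. The image of
a strictly lower matrix has zero diagonal, because the eigenvector columns of `Q` and rows of `Q⁻¹`
are aligned with the triangular flag, so summing the squared multipliers over `n` gains at least
`γ`. A duality argument carries this bound back to `Y`; the similarity and its inverse each cost a
factor `(‖Q‖ ‖Q⁻¹‖)² ≤ κ(V)²`.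
-/
-- `‖A‖` for a matrix `A` is its spectral norm; Frobenius norms appear as `‖frobVec A‖`.
open scoped RealInnerProductSpace Matrix.Norms.L2Operator

section Duality

variable {E ι : Type*} [NormedAddCommGroup E] [InnerProductSpace ℝ E] [FiniteDimensional ℝ E]

lemma sq_le_sq_of_sq_le_mul {x c : ℝ} (h : x ^ 2 ≤ c * x) : x ^ 2 ≤ c ^ 2 := by
  nlinarith

lemma exists_mem_inner_map_eq (S : Submodule ℝ E) (Φ : E ≃ₗ[ℝ] E) (y : E) :
    ∃ w₀ ∈ S, ∀ w ∈ S, ⟪Φ w₀, Φ w⟫ = ⟪y, w⟫ := by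
  set K := S.map Φ.toLinearMap
  set v := LinearMap.adjoint Φ.symm.toLinearMap y
  obtain ⟨w₀, hw₀, hu⟩ : K.starProjection v ∈ K := K.starProjection_apply_mem v
  refine ⟨w₀, hw₀, fun w hw => ?_⟩
  have horth := K.starProjection_inner_eq_zero v (Φ w) ⟨w, hw, rfl⟩
  rw [inner_sub_left, sub_eq_zero, ← hu] at horth
  simp only [LinearEquiv.coe_coe] at horth
  rw [← horth, LinearMap.adjoint_inner_left]
  simp

theorem mul_norm_sq_le_sum_norm_sq_of_gap [Fintype ι] (S : Submodule ℝ E) (Φ : E ≃ₗ[ℝ] E)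
    {a b γ : ℝ} (ha : ∀ x, ‖Φ x‖ ≤ a * ‖x‖) (hb : ∀ x, ‖Φ.symm x‖ ≤ b * ‖x‖)
    (H : ι → E →ₗ[ℝ] E) (hH : ∀ n, (H n).IsSymmetric)
    (hHS : ∀ n, ∀ w ∈ S, Φ.symm (H n (Φ w)) ∈ S)
    (hγ : 0 ≤ γ) (hgap : ∀ w ∈ S, γ * ‖Φ w‖ ^ 2 ≤ ∑ n, ‖H n (Φ w)‖ ^ 2)
    {y : E} (hy : y ∈ S) (c : ι → E) (hc : ∀ n, ∀ w ∈ S, ⟪c n, w⟫ = ⟪y, Φ.symm (H n (Φ w))⟫) :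
    γ * ‖y‖ ^ 2 ≤ (a * b) ^ 2 * ∑ n, ‖c n‖ ^ 2 := by
  obtain ⟨w₀, hw₀, hrep⟩ := exists_mem_inner_map_eq S Φ y
  have hy_le : ‖y‖ ^ 2 ≤ (a * ‖Φ w₀‖) ^ 2 := by
    refine sq_le_sq_of_sq_le_mul ?_
    calc ‖y‖ ^ 2 = ⟪Φ w₀, Φ y⟫ := by rw [hrep y hy, real_inner_self_eq_norm_sq]
      _ ≤ ‖Φ w₀‖ * (a * ‖y‖) := (real_inner_le_norm _ _).trans (by gcongr; exact ha y)
      _ = a * ‖Φ w₀‖ * ‖y‖ := by ring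
  have hH_le : ∀ n, ‖H n (Φ w₀)‖ ^ 2 ≤ (b * ‖c n‖) ^ 2 := by
    intro n
    set z := H n (Φ w₀)
    have hw : Φ.symm z ∈ S := hHS n w₀ hw₀
    refine sq_le_sq_of_sq_le_mul ?_
    calc ‖z‖ ^ 2 = ⟪c n, Φ.symm z⟫ := by
          rw [hc n _ hw, ← hrep _ (hHS n _ hw), LinearEquiv.apply_symm_apply, ← hH n,
            LinearEquiv.apply_symm_apply, real_inner_self_eq_norm_sq]
      _ ≤ ‖c n‖ * (b * ‖z‖) := (real_inner_le_norm _ _).trans (by gcongr; exact hb z)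
      _ = b * ‖c n‖ * ‖z‖ := by ring
  calc γ * ‖y‖ ^ 2 ≤ a ^ 2 * (γ * ‖Φ w₀‖ ^ 2) := by nlinarith
    _ ≤ a ^ 2 * ∑ n, (b * ‖c n‖) ^ 2 :=
        mul_le_mul_of_nonneg_left ((hgap w₀ hw₀).trans (Finset.sum_le_sum fun n _ => hH_le n))
          (sq_nonneg a)
    _ = (a * b) ^ 2 * ∑ n, ‖c n‖ ^ 2 := by simp only [mul_pow, Finset.mul_sum]; ring_nf

end Duality

section SingularValues

variable {n : Type*} [Fintype n]

lemma enorm_eq_norm_toLp (x : n → ℝ) : _root_.enorm x = ‖WithLp.toLp 2 x‖ := by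
  simp [_root_.enorm, EuclideanSpace.norm_eq]

lemma sigMin_nonneg (A : Matrix n n ℝ) : 0 ≤ sigMin A :=
  Real.sInf_nonneg (by rintro _ ⟨x, _, rfl⟩; exact Real.sqrt_nonneg _)

variable [DecidableEq n]

lemma l2_opNorm_transpose (A : Matrix n n ℝ) : ‖Aᵀ‖ = ‖A‖ := by
  rw [← Matrix.conjTranspose_eq_transpose_of_trivial, Matrix.l2_opNorm_conjTranspose]

lemma l2_opNorm_mul_of_orthogonal_left {U : Matrix n n ℝ} (hU : Uᵀ * U = 1) (A : Matrix n n ℝ) :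
    ‖U * A‖ = ‖A‖ := by
  have hUA : (U * A)ᴴ * (U * A) = Aᴴ * A := by
    rw [Matrix.conjTranspose_mul, Matrix.conjTranspose_eq_transpose_of_trivial U, Matrix.mul_assoc,
      ← Matrix.mul_assoc Uᵀ, hU, Matrix.one_mul]
  have h := Matrix.l2_opNorm_conjTranspose_mul_self (U * A)
  rw [hUA, Matrix.l2_opNorm_conjTranspose_mul_self] at h
  exact (mul_self_inj (norm_nonneg _) (norm_nonneg _)).mp h.symm

lemma l2_opNorm_mul_of_orthogonal_right {U : Matrix n n ℝ} (hU : U * Uᵀ = 1) (A : Matrix n n ℝ) :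
    ‖A * U‖ = ‖A‖ := by
  rw [← l2_opNorm_transpose, Matrix.transpose_mul,
    l2_opNorm_mul_of_orthogonal_left (by rwa [Matrix.transpose_transpose]), l2_opNorm_transpose]

lemma sigMax_eq_l2_opNorm (A : Matrix n n ℝ) : sigMax A = ‖A‖ := by
  rw [Matrix.l2_opNorm_def, ← ContinuousLinearMap.sSup_sphere_eq_norm, sigMax]
  congr 1
  ext r
  constructor
  · rintro ⟨x, hx, rfl⟩
    exact ⟨WithLp.toLp 2 x, by simpa [enorm_eq_norm_toLp] using hx, (enorm_eq_norm_toLp _).symm⟩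
  · rintro ⟨x, hx, rfl⟩
    exact ⟨x.ofLp, by simpa [enorm_eq_norm_toLp] using hx, by rw [enorm_eq_norm_toLp]; rfl⟩

lemma sigMin_mul_norm_le (A : Matrix n n ℝ) (x : EuclideanSpace ℝ n) :
    sigMin A * ‖x‖ ≤ ‖Matrix.toEuclideanLin A x‖ := by
  rcases eq_or_ne x 0 with rfl | hx
  · simp
  have hx' : 0 < ‖x‖ := norm_pos_iff.mpr hx
  have hmem : ‖Matrix.toEuclideanLin A (‖x‖⁻¹ • x)‖ ∈
      {r | ∃ y : n → ℝ, _root_.enorm y = 1 ∧ r = _root_.enorm (A *ᵥ y)} :=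
    ⟨(‖x‖⁻¹ • x).ofLp, by rw [enorm_eq_norm_toLp]; simp [norm_smul, hx'.ne'],
      by rw [enorm_eq_norm_toLp]; rfl⟩
  have hle := csInf_le ⟨0, by rintro _ ⟨y, _, rfl⟩; exact Real.sqrt_nonneg _⟩ hmem
  rw [map_smul, norm_smul, norm_inv, norm_norm] at hle
  rw [sigMin]
  calc _ ≤ ‖x‖⁻¹ * ‖Matrix.toEuclideanLin A x‖ * ‖x‖ := by gcongr
    _ = _ := by field_simp

lemma l2_opNorm_inv_le {V : Matrix n n ℝ} (hV : IsUnit V) (h : 0 < sigMin V) :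
    ‖V⁻¹‖ ≤ (sigMin V)⁻¹ := by
  rw [Matrix.l2_opNorm_def]
  refine ContinuousLinearMap.opNorm_le_bound _ (inv_nonneg.mpr h.le) fun y => ?_
  rw [inv_mul_eq_div, le_div_iff₀' h]
  have hinv : Matrix.toEuclideanLin V (Matrix.toEuclideanLin V⁻¹ y) = y := by
    change WithLp.toLp 2 (V *ᵥ (V⁻¹ *ᵥ y.ofLp)) = y
    rw [Matrix.mulVec_mulVec, Matrix.mul_nonsing_inv _ ((Matrix.isUnit_iff_isUnit_det V).mp hV),
      Matrix.one_mulVec]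
  have h := sigMin_mul_norm_le V (Matrix.toEuclideanLin V⁻¹ y)
  rw [hinv] at h
  exact h

lemma l2_opNorm_mul_l2_opNorm_inv_le_condNum {V : Matrix n n ℝ} (hV : IsUnit V)
    (h : 0 < sigMin V) : ‖V‖ * ‖V⁻¹‖ ≤ condNum V := by
  rw [condNum, sigMax_eq_l2_opNorm, div_eq_mul_inv]
  exact mul_le_mul_of_nonneg_left (l2_opNorm_inv_le hV h) (norm_nonneg _)

end SingularValues

section Frobenius

variable {m n l : Type*}

def frobVec : Matrix m n ℝ ≃ₗ[ℝ] EuclideanSpace ℝ (m × n) :=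
  ((WithLp.linearEquiv 2 ℝ (m × n → ℝ)).trans
    ((LinearEquiv.curry ℝ ℝ m n).trans (Matrix.ofLinearEquiv ℝ))).symm

@[simp] lemma frobVec_apply (A : Matrix m n ℝ) (p : m × n) : frobVec A p = A p.1 p.2 := rfl

variable [Fintype m] [Fintype n] [Fintype l]

lemma norm_frobVec_sq (A : Matrix m n ℝ) : ‖frobVec A‖ ^ 2 = ∑ i, ∑ j, A i j ^ 2 := by
  simp [EuclideanSpace.norm_sq_eq, Fintype.sum_prod_type]

lemma norm_frobVec (A : Matrix m n ℝ) : ‖frobVec A‖ = frob A := by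
  rw [frob, ← norm_frobVec_sq, Real.sqrt_sq (norm_nonneg _)]

lemma inner_frobVec (A B : Matrix m n ℝ) : ⟪frobVec A, frobVec B⟫ = (Aᵀ * B).trace := by
  simp only [PiLp.inner_apply, Fintype.sum_prod_type, frobVec_apply, Matrix.trace,
    Matrix.diag_apply, Matrix.mul_apply, Matrix.transpose_apply, RCLike.inner_apply, conj_trivial]
  rw [Finset.sum_comm]
  simp only [mul_comm]

lemma inner_frobVec_mul_left (A : Matrix l m ℝ) (B : Matrix m n ℝ) (C : Matrix l n ℝ) :
    ⟪frobVec (A * B), frobVec C⟫ = ⟪frobVec B, frobVec (Aᵀ * C)⟫ := by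
  rw [inner_frobVec, inner_frobVec, Matrix.transpose_mul, Matrix.mul_assoc]

lemma inner_frobVec_mul_right (A : Matrix n l ℝ) (B : Matrix m n ℝ) (C : Matrix m l ℝ) :
    ⟪frobVec (B * A), frobVec C⟫ = ⟪frobVec B, frobVec (C * Aᵀ)⟫ := by
  rw [inner_frobVec, inner_frobVec, Matrix.transpose_mul, Matrix.mul_assoc, Matrix.trace_mul_comm,
    Matrix.mul_assoc]

lemma norm_frobVec_transpose (A : Matrix m n ℝ) : ‖frobVec Aᵀ‖ = ‖frobVec A‖ := by
  rw [← sq_eq_sq₀ (norm_nonneg _) (norm_nonneg _), norm_frobVec_sq, norm_frobVec_sq]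
  exact Finset.sum_comm

lemma norm_frobVec_mul_le [DecidableEq n] (A : Matrix m n ℝ) (B : Matrix n l ℝ) :
    ‖frobVec (A * B)‖ ≤ ‖A‖ * ‖frobVec B‖ := by
  have hcol : ∀ j, ∑ i, (A * B) i j ^ 2 ≤ ‖A‖ ^ 2 * ∑ k, B k j ^ 2 := by
    intro j
    have := pow_le_pow_left₀ (norm_nonneg _) (A.l2_opNorm_mulVec (WithLp.toLp 2 fun k => B k j)) 2
    rw [mul_pow, EuclideanSpace.norm_sq_eq, EuclideanSpace.norm_sq_eq] at this
    simpa [Matrix.mulVec, dotProduct, Matrix.mul_apply] using this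
  rw [← pow_le_pow_iff_left₀ (norm_nonneg _) (by positivity) two_ne_zero]
  calc ‖frobVec (A * B)‖ ^ 2 = ∑ j, ∑ i, (A * B) i j ^ 2 := by
        rw [norm_frobVec_sq, Finset.sum_comm]
    _ ≤ ∑ j, ‖A‖ ^ 2 * ∑ k, B k j ^ 2 := Finset.sum_le_sum fun j _ => hcol j
    _ = (‖A‖ * ‖frobVec B‖) ^ 2 := by
        rw [mul_pow, norm_frobVec_sq, Finset.sum_comm, Finset.mul_sum]

lemma norm_frobVec_mul_mul_le [DecidableEq n] [DecidableEq l] (A : Matrix m n ℝ)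
    (W : Matrix n l ℝ) (B : Matrix l l ℝ) :
    ‖frobVec (A * W * B)‖ ≤ ‖A‖ * ‖B‖ * ‖frobVec W‖ := by
  calc ‖frobVec (A * W * B)‖ = ‖frobVec (A * (W * B))‖ := by rw [Matrix.mul_assoc]
    _ ≤ ‖A‖ * ‖frobVec (W * B)‖ := norm_frobVec_mul_le A _
    _ = ‖A‖ * ‖frobVec (Bᵀ * Wᵀ)‖ := by rw [← norm_frobVec_transpose, Matrix.transpose_mul]
    _ ≤ ‖A‖ * (‖Bᵀ‖ * ‖frobVec Wᵀ‖) := by gcongr; exact norm_frobVec_mul_le _ _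
    _ = ‖A‖ * ‖B‖ * ‖frobVec W‖ := by
        rw [norm_frobVec_transpose, l2_opNorm_transpose, mul_assoc]

end Frobenius

section Triangular

variable {d : ℕ}

def strictLower (d : ℕ) : Submodule ℝ (Mat d) where
  carrier := {W | ∀ i j, i ≤ j → W i j = 0}
  add_mem' hA hB i j h := by simp [hA i j h, hB i j h]
  zero_mem' _ _ _ := rfl
  smul_mem' c _ hA i j h := by simp [hA i j h]

lemma lowPart_mem_strictLower (A : Mat d) : lowPart A ∈ strictLower d := fun i j h => by
  simp [lowPart, not_lt.mpr h]

lemma lowPart_sub (A B : Mat d) : lowPart (A - B) = lowPart A - lowPart B := by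
  ext i j
  simp only [lowPart, Matrix.of_apply, Matrix.sub_apply]
  split_ifs <;> simp

lemma lowPart_eq_zero_of_transpose_mem {A : Mat d} (hA : Aᵀ ∈ strictLower d) :
    lowPart A = 0 := by
  ext i j
  simp only [lowPart, Matrix.of_apply, Matrix.zero_apply]
  split_ifs with h
  · exact hA j i h.le
  · rfl

lemma blockTriangular_of_lowPart_eq_zero {T : Mat d} (hT : lowPart T = 0) :
    T.BlockTriangular id :=
  fun i j h => (by simpa [lowPart] using congrFun (congrFun hT i) j : j < i → T i j = 0) h

lemma transpose_mul_sub_mem_strictLower {T W : Mat d} (hT : T.BlockTriangular id)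
    (hW : W ∈ strictLower d) : Tᵀ * W - W * Tᵀ ∈ strictLower d := by
  intro i j hij
  have h₁ : (Tᵀ * W) i j = 0 := by
    refine (Matrix.mul_apply ..).trans (Finset.sum_eq_zero fun k _ => ?_)
    rcases lt_or_ge i k with hik | hki
    · simp [hT hik]
    · simp [hW k j (hki.trans hij)]
  have h₂ : (W * Tᵀ) i j = 0 := by
    refine (Matrix.mul_apply ..).trans (Finset.sum_eq_zero fun k _ => ?_)
    rcases lt_or_ge k j with hkj | hjk
    · simp [hT hkj]
    · simp [hW i k (hij.trans hjk)]
  simp [h₁, h₂]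

lemma inner_frobVec_lowPart (A : Mat d) {W : Mat d} (hW : W ∈ strictLower d) :
    ⟪frobVec (lowPart A), frobVec W⟫ = ⟪frobVec A, frobVec W⟫ := by
  simp only [PiLp.inner_apply, frobVec_apply, lowPart, Matrix.of_apply]
  refine Finset.sum_congr rfl fun p _ => ?_
  split_ifs with h
  · rfl
  · simp [hW p.1 p.2 (not_lt.mp h)]

lemma lowPart_sub_transpose_of_isSkew {X : Mat d} (hX : IsSkew X) :
    lowPart X - (lowPart X)ᵀ = X := by
  ext i j
  have hji : X j i = -X i j := by simpa using congrFun (congrFun hX i) j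
  simp only [lowPart, Matrix.sub_apply, Matrix.transpose_apply, Matrix.of_apply]
  rcases lt_trichotomy j i with h | rfl | h
  · simp [h, h.not_gt]
  · simp only [lt_irrefl, if_false]; linarith
  · simp [h, h.not_gt, hji]

lemma frob_sq_of_isSkew {X : Mat d} (hX : IsSkew X) :
    frob X ^ 2 = 2 * frob (lowPart X) ^ 2 := by
  have hentry : ∀ i j, X i j ^ 2 = lowPart X i j ^ 2 + lowPart X j i ^ 2 := by
    intro i j
    have hji : X j i = -X i j := by simpa using congrFun (congrFun hX i) j
    simp only [lowPart, Matrix.of_apply]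
    rcases lt_trichotomy j i with h | rfl | h
    · simp [h, h.not_gt]
    · simp only [lt_irrefl, if_false]; nlinarith
    · simp [h, h.not_gt, hji]
  simp only [← norm_frobVec, norm_frobVec_sq, hentry, Finset.sum_add_distrib]
  rw [Finset.sum_comm (f := fun i j => lowPart X j i ^ 2)]
  ring

lemma lowPart_mcomm_of_isSkew {T X : Mat d} (hT : T.BlockTriangular id) (hX : IsSkew X) :
    lowPart (mcomm T X) = lowPart (T * lowPart X - lowPart X * T) := by
  set Y := lowPart X
  have hupper : lowPart (T * Yᵀ - Yᵀ * T) = 0 := by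
    apply lowPart_eq_zero_of_transpose_mem
    convert neg_mem (transpose_mul_sub_mem_strictLower hT (lowPart_mem_strictLower X)) using 1
    simp [Matrix.transpose_mul, Y]
  calc lowPart (mcomm T X) = lowPart ((T * Y - Y * T) - (T * Yᵀ - Yᵀ * T)) := by
        congr 1
        conv_lhs => rw [mcomm, ← lowPart_sub_transpose_of_isSkew hX]
        noncomm_ring
    _ = lowPart (T * Y - Y * T) := by rw [lowPart_sub, hupper, sub_zero]

end Triangular

section Eigenvectors

variable {n R : Type*} [Fintype n] [LinearOrder n]

lemma exists_last_ne_zero [Zero R] {v : n → R} (hv : v ≠ 0) :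
    ∃ k, v k ≠ 0 ∧ ∀ a, k < a → v a = 0 := by
  classical
  obtain ⟨j, hj⟩ := Function.ne_iff.mp hv
  obtain ⟨k, hk, hmax⟩ :=
    Finset.exists_max_image (Finset.univ.filter (v · ≠ 0)) id ⟨j, by simpa using hj⟩
  exact ⟨k, (Finset.mem_filter.mp hk).2,
    fun a ha => by_contra fun h => (hmax a (by simpa using h)).not_gt ha⟩

lemma exists_first_ne_zero [Zero R] {v : n → R} (hv : v ≠ 0) :
    ∃ k, v k ≠ 0 ∧ ∀ a, a < k → v a = 0 := by
  classical
  obtain ⟨j, hj⟩ := Function.ne_iff.mp hv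
  obtain ⟨k, hk, hmin⟩ :=
    Finset.exists_min_image (Finset.univ.filter (v · ≠ 0)) id ⟨j, by simpa using hj⟩
  exact ⟨k, (Finset.mem_filter.mp hk).2,
    fun a ha => by_contra fun h => (hmin a (by simpa using h)).not_gt ha⟩

variable [CommRing R] [IsDomain R] {T : Matrix n n R} {v : n → R} {c : R} {k : n}

lemma Matrix.BlockTriangular.diag_eq_of_mulVec_eq_smul (hT : T.BlockTriangular id)
    (hv : T *ᵥ v = c • v) (hk : v k ≠ 0) (hlast : ∀ a, k < a → v a = 0) : T k k = c := by
  have h := congrFun hv k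
  rw [Matrix.mulVec, dotProduct, Finset.sum_eq_single k] at h
  · exact mul_right_cancel₀ hk (by simpa using h)
  · intro b _ hb
    rcases hb.lt_or_gt with hb | hb
    · simp [hT hb]
    · simp [hlast b hb]
  · simp

lemma Matrix.BlockTriangular.diag_eq_of_vecMul_eq_smul (hT : T.BlockTriangular id)
    (hv : v ᵥ* T = c • v) (hk : v k ≠ 0) (hfirst : ∀ a, a < k → v a = 0) : T k k = c := by
  have h := congrFun hv k
  rw [Matrix.vecMul, dotProduct, Finset.sum_eq_single k] at h
  · exact mul_left_cancel₀ hk (by simpa [mul_comm] using h)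
  · intro b _ hb
    rcases hb.lt_or_gt with hb | hb
    · simp [hfirst b hb]
    · simp [hT hb]
  · simp

end Eigenvectors

section JointTriangularization

variable {d N : ℕ} {Q : Mat d} {Λ : Fin N → Fin d → ℝ}

lemma exists_diag_eq_of_col (hQ : IsUnit Q)
    (hT : ∀ n, (Q * diagonal (Λ n) * Q⁻¹).BlockTriangular id) (j : Fin d) :
    ∃ k, Q k j ≠ 0 ∧ (∀ a, k < a → Q a j = 0) ∧
      ∀ n, (Q * diagonal (Λ n) * Q⁻¹) k k = Λ n j := by
  have hdet := (Matrix.isUnit_iff_isUnit_det Q).mp hQ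
  obtain ⟨k, hk, hlast⟩ := exists_last_ne_zero (v := fun a => Q a j) fun h =>
    hdet.ne_zero (Matrix.det_eq_zero_of_column_eq_zero j fun a => congrFun h a)
  refine ⟨k, hk, hlast, fun n => (hT n).diag_eq_of_mulVec_eq_smul ?_ hk hlast⟩
  ext a
  rw [show ((Q * diagonal (Λ n) * Q⁻¹) *ᵥ fun a => Q a j) a = (Q * diagonal (Λ n) * Q⁻¹ * Q) a j
    from Matrix.mul_apply'.symm, Matrix.mul_assoc _ Q⁻¹, Matrix.nonsing_inv_mul Q hdet]
  simp [mul_comm]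

lemma exists_diag_eq_of_inv_row (hQ : IsUnit Q)
    (hT : ∀ n, (Q * diagonal (Λ n) * Q⁻¹).BlockTriangular id) (j : Fin d) :
    ∃ k, Q⁻¹ j k ≠ 0 ∧ (∀ b, b < k → Q⁻¹ j b = 0) ∧
      ∀ n, (Q * diagonal (Λ n) * Q⁻¹) k k = Λ n j := by
  have hdet := (Matrix.isUnit_iff_isUnit_det Q).mp hQ
  obtain ⟨k, hk, hfirst⟩ := exists_first_ne_zero (v := fun b => Q⁻¹ j b) fun h =>
    (Matrix.isUnit_nonsing_inv_det Q hdet).ne_zero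
      (Matrix.det_eq_zero_of_row_eq_zero j fun b => congrFun h b)
  refine ⟨k, hk, hfirst, fun n => (hT n).diag_eq_of_vecMul_eq_smul ?_ hk hfirst⟩
  ext a
  rw [show ((fun b => Q⁻¹ j b) ᵥ* (Q * diagonal (Λ n) * Q⁻¹)) a =
      (Q⁻¹ * (Q * diagonal (Λ n) * Q⁻¹)) j a from Matrix.mul_apply'.symm,
    ← Matrix.mul_assoc, ← Matrix.mul_assoc, Matrix.nonsing_inv_mul Q hdet]
  simp

/- Column `i` of `Q` ends at `r i`, row `i` of `Q⁻¹` starts at `s i`, and both positions carry the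
joint eigenvalue `(Λ n i)ₙ` on the diagonals of the `Tₙ`. As `r` is a bijection these joint diagonal
values are distinct, so `s = r`, and only entries `W a b` with `a ≤ r i ≤ b` contribute. -/
lemma diag_transpose_conj_eq_zero (hQ : IsUnit Q)
    (hT : ∀ n, (Q * diagonal (Λ n) * Q⁻¹).BlockTriangular id)
    (hΛ : ∀ i j, (∀ n, Λ n i = Λ n j) → i = j) {W : Mat d} (hW : W ∈ strictLower d) (i : Fin d) :
    (Qᵀ * W * Q⁻¹ᵀ) i i = 0 := by
  choose r _ hr_last hr using exists_diag_eq_of_col hQ hT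
  choose s _ hs_first hs using exists_diag_eq_of_inv_row hQ hT
  have hr_inj : Function.Injective r := fun j j' h =>
    hΛ _ _ fun n => by rw [← hr j n, h, hr j' n]
  have hsr : s i = r i := by
    obtain ⟨j, hj⟩ := Finite.surjective_of_injective hr_inj (s i)
    obtain rfl : j = i := hΛ _ _ fun n => by rw [← hr j n, hj, hs i n]
    exact hj.symm
  rw [Matrix.mul_apply]
  refine Finset.sum_eq_zero fun b _ => ?_
  by_cases hb : Q⁻¹ i b = 0
  · simp [hb]
  have hrb : r i ≤ b := hsr ▸ not_lt.mp fun h => hb (hs_first i b h)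
  refine mul_eq_zero_of_left ((Matrix.mul_apply ..).trans (Finset.sum_eq_zero fun a _ => ?_)) _
  by_cases ha : Q a i = 0
  · simp [ha]
  have har : a ≤ r i := not_lt.mp fun h => ha (hr_last i a h)
  simp [hW a b (har.trans hrb)]

lemma inner_frobVec_lowPart_commutator (T : Mat d) {Y W : Mat d} (hW : W ∈ strictLower d) :
    ⟪frobVec (lowPart (T * Y - Y * T)), frobVec W⟫ = ⟪frobVec Y, frobVec (Tᵀ * W - W * Tᵀ)⟫ := by
  rw [inner_frobVec_lowPart _ hW, map_sub, inner_sub_left, inner_frobVec_mul_left,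
    inner_frobVec_mul_right, map_sub, inner_sub_right]

lemma mul_norm_sq_le_sum_commutator {γ : ℝ} (hgap : ∀ i j, i ≠ j → γ ≤ ∑ n, (Λ n i - Λ n j) ^ 2)
    {Z : Mat d} (hZ : ∀ i, Z i i = 0) :
    γ * ‖frobVec Z‖ ^ 2 ≤ ∑ n, ‖frobVec (diagonal (Λ n) * Z - Z * diagonal (Λ n))‖ ^ 2 := by
  have hswap : ∑ n, ‖frobVec (diagonal (Λ n) * Z - Z * diagonal (Λ n))‖ ^ 2 =
      ∑ i, ∑ j, (∑ n, (Λ n i - Λ n j) ^ 2) * Z i j ^ 2 := by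
    simp only [norm_frobVec_sq, Matrix.sub_apply, Matrix.diagonal_mul, Matrix.mul_diagonal,
      Finset.sum_mul]
    rw [Finset.sum_comm]
    refine Finset.sum_congr rfl fun i _ => ?_
    rw [Finset.sum_comm]
    exact Finset.sum_congr rfl fun j _ => Finset.sum_congr rfl fun n _ => by ring
  rw [hswap, norm_frobVec_sq, Finset.mul_sum]
  refine Finset.sum_le_sum fun i _ => ?_
  rw [Finset.mul_sum]
  refine Finset.sum_le_sum fun j _ => ?_
  rcases eq_or_ne i j with rfl | hij
  · simp [hZ]
  · exact mul_le_mul_of_nonneg_right (hgap i j hij) (sq_nonneg _)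

def commutatorOp (D : Mat d) : Module.End ℝ (EuclideanSpace ℝ (Fin d × Fin d)) :=
  frobVec.conj (LinearMap.mulLeft ℝ D - LinearMap.mulRight ℝ D)

@[simp] lemma commutatorOp_frobVec (D W : Mat d) :
    commutatorOp D (frobVec W) = frobVec (D * W - W * D) := by
  simp [commutatorOp, LinearEquiv.conj_apply]

lemma Matrix.IsSymm.isSymmetric_commutatorOp {D : Mat d} (hD : D.IsSymm) :
    (commutatorOp D).IsSymmetric := fun x y => by
  obtain ⟨A, rfl⟩ := frobVec.surjective x
  obtain ⟨B, rfl⟩ := frobVec.surjective y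
  rw [commutatorOp_frobVec, commutatorOp_frobVec, map_sub, inner_sub_left, inner_frobVec_mul_left,
    inner_frobVec_mul_right, hD.eq, map_sub, inner_sub_right]

def transposeConj (hQ : IsUnit Q) :
    EuclideanSpace ℝ (Fin d × Fin d) ≃ₗ[ℝ] EuclideanSpace ℝ (Fin d × Fin d) :=
  have h : Q⁻¹ᵀ * Qᵀ = 1 ∧ Qᵀ * Q⁻¹ᵀ = 1 := by
    have hdet := (Matrix.isUnit_iff_isUnit_det Q).mp hQ
    simp only [← Matrix.transpose_mul, Matrix.mul_nonsing_inv Q hdet,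
      Matrix.nonsing_inv_mul Q hdet, Matrix.transpose_one, and_self]
  frobVec.symm ≪≫ₗ LinearEquiv.ofLinearMap (LinearMap.mulLeftRight ℝ (Qᵀ, Q⁻¹ᵀ))
    (LinearMap.mulLeftRight ℝ (Q⁻¹ᵀ, Qᵀ))
    (by
      ext1 W
      simp only [LinearMap.comp_apply, LinearMap.mulLeftRight_apply, LinearMap.id_apply,
        Matrix.mul_assoc, h.2, Matrix.mul_one]
      rw [← Matrix.mul_assoc, h.2, Matrix.one_mul])
    (by
      ext1 W
      simp only [LinearMap.comp_apply, LinearMap.mulLeftRight_apply, LinearMap.id_apply,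
        Matrix.mul_assoc, h.1, Matrix.mul_one]
      rw [← Matrix.mul_assoc, h.1, Matrix.one_mul]) ≪≫ₗ frobVec

@[simp] lemma transposeConj_frobVec (hQ : IsUnit Q) (W : Mat d) :
    transposeConj hQ (frobVec W) = frobVec (Qᵀ * W * Q⁻¹ᵀ) := by
  simp [transposeConj]

@[simp] lemma transposeConj_symm_frobVec (hQ : IsUnit Q) (Z : Mat d) :
    (transposeConj hQ).symm (frobVec Z) = frobVec (Q⁻¹ᵀ * Z * Qᵀ) := by
  simp [transposeConj]

lemma norm_transposeConj_le (hQ : IsUnit Q) (x : EuclideanSpace ℝ (Fin d × Fin d)) :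
    ‖transposeConj hQ x‖ ≤ ‖Q‖ * ‖Q⁻¹‖ * ‖x‖ := by
  obtain ⟨W, rfl⟩ := frobVec.surjective x
  simpa only [transposeConj_frobVec, l2_opNorm_transpose] using
    norm_frobVec_mul_mul_le Qᵀ W Q⁻¹ᵀ

lemma norm_transposeConj_symm_le (hQ : IsUnit Q) (x : EuclideanSpace ℝ (Fin d × Fin d)) :
    ‖(transposeConj hQ).symm x‖ ≤ ‖Q‖ * ‖Q⁻¹‖ * ‖x‖ := by
  obtain ⟨Z, rfl⟩ := frobVec.surjective x
  simpa only [transposeConj_symm_frobVec, l2_opNorm_transpose, mul_comm ‖Q⁻¹‖] using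
    norm_frobVec_mul_mul_le Q⁻¹ᵀ Z Qᵀ

lemma transposeConj_symm_commutatorOp (hQ : IsUnit Q) {D : Mat d} (hD : D.IsSymm) (W : Mat d) :
    (transposeConj hQ).symm (commutatorOp D (transposeConj hQ (frobVec W))) =
      frobVec ((Q * D * Q⁻¹)ᵀ * W - W * (Q * D * Q⁻¹)ᵀ) := by
  have h : Q⁻¹ᵀ * Qᵀ = 1 := by
    rw [← Matrix.transpose_mul, Matrix.mul_nonsing_inv Q ((Matrix.isUnit_iff_isUnit_det Q).mp hQ),
      Matrix.transpose_one]
  simp only [transposeConj_frobVec, commutatorOp_frobVec, transposeConj_symm_frobVec]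
  congr 1
  simp only [Matrix.transpose_mul, hD.eq, Matrix.mul_sub, Matrix.sub_mul, ← Matrix.mul_assoc, h,
    Matrix.one_mul]
  simp only [Matrix.mul_assoc, h, Matrix.mul_one]

theorem mul_frob_sq_le_sum_frob_lowPart_commutator (hQ : IsUnit Q) {γ : ℝ} (hγ : 0 < γ)
    (hgap : ∀ i j, i ≠ j → γ ≤ ∑ n, (Λ n i - Λ n j) ^ 2)
    (hT : ∀ n, (Q * diagonal (Λ n) * Q⁻¹).BlockTriangular id) {Y : Mat d}
    (hY : Y ∈ strictLower d) :
    γ * frob Y ^ 2 ≤ (‖Q‖ * ‖Q⁻¹‖) ^ 4 *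
      ∑ n, frob (lowPart (Q * diagonal (Λ n) * Q⁻¹ * Y - Y * (Q * diagonal (Λ n) * Q⁻¹))) ^ 2 := by
  have hΛ : ∀ i j, (∀ n, Λ n i = Λ n j) → i = j := fun i j h => by
    by_contra hij
    simpa [h, hγ.not_ge] using hgap i j hij
  set Φ := transposeConj hQ
  set H := fun n => commutatorOp (diagonal (Λ n))
  set S := (strictLower d).map (frobVec : Mat d ≃ₗ[ℝ] EuclideanSpace ℝ (Fin d × Fin d)).toLinearMap
  have hHS : ∀ n, ∀ w ∈ S, Φ.symm (H n (Φ w)) ∈ S := by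
    rintro n _ ⟨W, hW, rfl⟩
    rw [LinearEquiv.coe_coe, transposeConj_symm_commutatorOp hQ (Matrix.isSymm_diagonal _)]
    exact Submodule.mem_map_of_mem (transpose_mul_sub_mem_strictLower (hT n) hW)
  have hgapS : ∀ w ∈ S, γ * ‖Φ w‖ ^ 2 ≤ ∑ n, ‖H n (Φ w)‖ ^ 2 := by
    rintro _ ⟨W, hW, rfl⟩
    simp only [LinearEquiv.coe_coe, Φ, H, transposeConj_frobVec, commutatorOp_frobVec]
    exact mul_norm_sq_le_sum_commutator hgap (diag_transpose_conj_eq_zero hQ hT hΛ hW)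
  have hc : ∀ n, ∀ w ∈ S,
      ⟪frobVec (lowPart (Q * diagonal (Λ n) * Q⁻¹ * Y - Y * (Q * diagonal (Λ n) * Q⁻¹))), w⟫ =
        ⟪frobVec Y, Φ.symm (H n (Φ w))⟫ := by
    rintro n _ ⟨W, hW, rfl⟩
    rw [LinearEquiv.coe_coe, transposeConj_symm_commutatorOp hQ (Matrix.isSymm_diagonal _)]
    exact inner_frobVec_lowPart_commutator _ hW
  rw [← norm_frobVec]
  refine (mul_norm_sq_le_sum_norm_sq_of_gap S Φ (norm_transposeConj_le hQ)
    (norm_transposeConj_symm_le hQ) H (fun n => (Matrix.isSymm_diagonal _).isSymmetric_commutatorOp)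
    hHS hγ.le hgapS (Submodule.mem_map_of_mem hY) _ hc).trans_eq ?_
  simp only [norm_frobVec]
  ring

end JointTriangularization

section Final

variable {d N : ℕ}

lemma gapMin_le_sum_sq (Λ : Fin N → Fin d → ℝ) {i j : Fin d} (hij : i ≠ j) :
    gapMin Λ ≤ ∑ n, (Λ n i - Λ n j) ^ 2 := by
  have hbdd : BddBelow {r | ∃ i i' : Fin d, i < i' ∧ r = ∑ n, (Λ n i - Λ n i') ^ 2} :=
    ⟨0, by rintro _ ⟨_, _, _, rfl⟩; positivity⟩
  rcases hij.lt_or_gt with h | h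
  · exact csInf_le hbdd ⟨i, j, h, rfl⟩
  · exact csInf_le hbdd ⟨j, i, h, by simp_rw [sub_sq_comm]⟩

lemma inv_transpose_mul_of_orthogonal {U V : Mat d} (hU : U * Uᵀ = 1) (hV : IsUnit V) :
    (Uᵀ * V)⁻¹ = V⁻¹ * U :=
  Matrix.inv_eq_left_inv (by
    rw [Matrix.mul_assoc, ← Matrix.mul_assoc U, hU, Matrix.one_mul,
      Matrix.nonsing_inv_mul _ ((Matrix.isUnit_iff_isUnit_det V).mp hV)])

lemma div_condNum_mul_le {V : Mat d} (hV : IsUnit V) {γ y S : ℝ} (hS : 0 ≤ S)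
    (h : γ * y ≤ (‖V‖ * ‖V⁻¹‖) ^ 4 * S) : γ / (2 * condNum V ^ 4) * (2 * y) ≤ S := by
  rcases (sigMin_nonneg V).eq_or_lt with h0 | hpos
  · rw [condNum, ← h0, div_zero]
    simpa using hS
  have hκ4 := pow_le_pow_left₀ (by positivity) (l2_opNorm_mul_l2_opNorm_inv_le_condNum hV hpos) 4
  rw [div_mul_eq_mul_div]
  refine div_le_of_le_mul₀ (by positivity) hS ?_
  nlinarith [mul_le_mul_of_nonneg_right hκ4 hS]

end Final

/-- lower bound `Σₙ ‖low([U₀ᵀ Mₙ U₀, X])‖² ≥ (γ/(2κ(V)⁴))‖X‖²`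
for skew-symmetric `X`. -/
theorem hessian_lower_bound {d N : ℕ} (V : Mat d) (hV : IsUnit V)
    (Λ : Fin N → Fin d → ℝ) (M : Fin N → Mat d)
    (hM : ∀ n, M n = V * Matrix.diagonal (Λ n) * V⁻¹)
    (hγ : 0 < gapMin Λ)
    (U₀ : Mat d) (hU₀ : ExactTriang U₀ M) :
    ∀ X : Mat d, IsSkew X →
      gapMin Λ / (2 * condNum V ^ 4) * frob X ^ 2 ≤
        ∑ n, frob (lowPart (mcomm (U₀ᵀ * M n * U₀) X)) ^ 2 := by
  intro X hX
  obtain ⟨hU, hlow⟩ := hU₀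
  have hUUt : U₀ * U₀ᵀ = 1 := mul_eq_one_comm.mp hU
  set Q := U₀ᵀ * V
  have hQinv : Q⁻¹ = V⁻¹ * U₀ := inv_transpose_mul_of_orthogonal hUUt hV
  have hT : ∀ n, U₀ᵀ * M n * U₀ = Q * diagonal (Λ n) * Q⁻¹ := fun n => by
    simp only [hM, hQinv, Q, Matrix.mul_assoc]
  have hTri : ∀ n, (U₀ᵀ * M n * U₀).BlockTriangular id := fun n =>
    blockTriangular_of_lowPart_eq_zero (hlow n)
  have hQ_norm : ‖Q‖ * ‖Q⁻¹‖ = ‖V‖ * ‖V⁻¹‖ := by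
    rw [hQinv, l2_opNorm_mul_of_orthogonal_left (by rwa [Matrix.transpose_transpose]),
      l2_opNorm_mul_of_orthogonal_right hUUt]
  have hQ : IsUnit Q := (IsUnit.of_mul_eq_one U₀ hU).mul hV
  have hbound := mul_frob_sq_le_sum_frob_lowPart_commutator hQ hγ (fun _ _ => gapMin_le_sum_sq Λ)
    (fun n => hT n ▸ hTri n) (lowPart_mem_strictLower X)
  simp only [← hT, ← lowPart_mcomm_of_isSkew (hTri _) hX, hQ_norm] at hbound
  rw [frob_sq_of_isSkew hX]
  exact div_condNum_mul_le hV (by positivity) hbound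
end
end
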